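/- Let p be an odd prime and m an integer not divisible by p. Then $\sum_{k=1}^{p-1} \frac{C_k}{m^k} \equiv \frac{m-4}{2}\left(1 - \left(\frac{m(m-4)}{p}\right)\right) \pmod{p}$, where $1/m^k$ and $1/2$ denote inverses mod p and $(\frac{\cdot}{p})$ is the Legendre symbol (0 if p divides the argument). -/

import Mathlib

/-! Put `x = m⁻¹` and `S = ∑_{k<p} binom(2k,k) xᵏ`. Modulo `p`, `binom(2k,k) ≡ (-4)ᵏ binom((p-1)/2,k)`
for `k < p`, so `S = (1 - 4x)^((p-1)/2)`, which is the Legendre symbol of `m(m-4) = m²(1-4x)` by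
Euler's criterion. The identity `2 C_k = 4 binom(2k,k) - binom(2k+2,k+1)` turns the Catalan sum into
`S` and the shifted sum `∑_{k<p} binom(2k+2,k+1) xᵏ`, and the latter is `m (S + 2x - 1)` because
`binom(2p,p) ≡ 2` and `x ^ p = x`. -/

open Finset

lemma two_mul_catalan_add_centralBinom_succ (k : ℕ) :
    2 * catalan k + (k + 1).centralBinom = 4 * k.centralBinom := by
  refine Nat.eq_of_mul_eq_mul_left k.succ_pos ?_
  have hC := succ_mul_catalan_eq_centralBinom k
  have hB := Nat.succ_mul_centralBinom_succ k
  zify at hC hB ⊢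
  linear_combination 2 * hC + hB

lemma Nat.cast_choose_succ_right_eq {R : Type*} [CommRing R] (n k : ℕ) :
    (n.choose (k + 1) : R) * (k + 1) = n.choose k * (n - k) := by
  rcases le_or_gt k n with hkn | hnk
  · have h := congrArg (Nat.cast : ℕ → R) (Nat.choose_succ_right_eq n k)
    push_cast [Nat.cast_sub hkn] at h
    exact h
  · simp [Nat.choose_eq_zero_of_lt hnk, Nat.choose_eq_zero_of_lt (hnk.trans k.lt_succ_self)]

lemma Finset.sum_range_choose_mul_pow_of_lt {R : Type*} [CommSemiring R] {n N : ℕ} (h : n < N)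
    (y : R) : ∑ k ∈ range N, (n.choose k : R) * y ^ k = (1 + y) ^ n := by
  rw [add_comm, add_pow]
  refine (sum_subset (range_subset_range.2 h) fun k _ hk => ?_).symm.trans
    (sum_congr rfl fun k _ => by ring)
  rw [Nat.choose_eq_zero_of_lt (by simpa using hk), Nat.cast_zero, zero_mul]

lemma Finset.sum_Icc_one_sub_one {M : Type*} [AddCommGroup M] {n : ℕ} (hn : 0 < n) (f : ℕ → M) :
    ∑ k ∈ Icc 1 (n - 1), f k = ∑ k ∈ range n, f k - f 0 := by
  have hIcc : Icc 1 (n - 1) = Ico 1 n := by ext k; simp only [mem_Icc, mem_Ico]; omega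
  rw [hIcc, range_eq_Ico, sum_eq_sum_Ico_succ_bot hn, add_sub_cancel_left]

section CommRing

variable {R : Type*} [CommRing R]

lemma two_mul_sum_catalan_mul_pow (n : ℕ) (x : R) :
    2 * ∑ k ∈ range n, (catalan k : R) * x ^ k =
      4 * ∑ k ∈ range n, (k.centralBinom : R) * x ^ k -
        ∑ k ∈ range n, ((k + 1).centralBinom : R) * x ^ k := by
  rw [eq_sub_iff_add_eq, mul_sum, mul_sum, ← sum_add_distrib]
  refine sum_congr rfl fun k _ => ?_
  have h := congrArg (Nat.cast : ℕ → R) (two_mul_catalan_add_centralBinom_succ k)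
  push_cast at h
  linear_combination x ^ k * h

lemma mul_sum_centralBinom_succ_mul_pow (n : ℕ) (x : R) :
    x * ∑ k ∈ range n, ((k + 1).centralBinom : R) * x ^ k =
      ∑ k ∈ range (n + 1), (k.centralBinom : R) * x ^ k - 1 := by
  rw [sum_range_succ', mul_sum]
  simp only [Nat.centralBinom_zero, Nat.cast_one, pow_zero, mul_one, add_sub_cancel_right]
  exact sum_congr rfl fun k _ => by ring

end CommRing

namespace ZMod

lemma natCast_ne_zero_of_pos_of_lt {n k : ℕ} (h0 : 0 < k) (hk : k < n) : (k : ZMod n) ≠ 0 := by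
  rw [Ne, natCast_eq_zero_iff]
  exact fun hdvd => (Nat.le_of_dvd h0 hdvd).not_gt hk

variable {p : ℕ} [Fact p.Prime]

lemma centralBinom_eq_neg_four_pow_mul_choose (hp : Odd p) {k : ℕ} (hk : k < p) :
    (k.centralBinom : ZMod p) = (-4) ^ k * ((p / 2).choose k : ZMod p) := by
  induction k with
  | zero => simp
  | succ k ih =>
    -- `2k + 1 = -2 (p/2 - k)` in `ZMod p`, so both sides satisfy the same first-order recurrence.
    have hhalf : 2 * ((p / 2 : ℕ) : ZMod p) + 1 = 0 := by
      exact_mod_cast (congrArg (Nat.cast : ℕ → ZMod p)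
        (Nat.two_mul_div_two_add_one_of_odd hp)).trans (natCast_self p)
    have hB := congrArg (Nat.cast : ℕ → ZMod p) (Nat.succ_mul_centralBinom_succ k)
    have hC := Nat.cast_choose_succ_right_eq (R := ZMod p) (p / 2) k
    push_cast at hB
    refine mul_left_cancel₀ (natCast_ne_zero_of_pos_of_lt k.succ_pos hk) ?_
    push_cast
    linear_combination hB + 2 * (2 * (k : ZMod p) + 1) * ih (k.lt_succ_self.trans hk)
      - (-4) ^ (k + 1) * hC + 2 * (-4) ^ k * ((p / 2).choose k : ZMod p) * hhalf

lemma centralBinom_self : (p.centralBinom : ZMod p) = 2 := by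
  have hp := (Fact.out : p.Prime).pos
  have h := (intCast_eq_intCast_iff _ _ p).2
    (Choose.choose_modEq_choose_mod_mul_choose_div (n := 2 * p) (k := p) (p := p))
  rw [Nat.mul_mod_left, Nat.mod_self, Nat.mul_div_cancel _ hp, Nat.div_self hp] at h
  push_cast at h
  simpa [Nat.centralBinom] using h

lemma sum_range_centralBinom_mul_pow (hp : Odd p) (x : ZMod p) :
    ∑ k ∈ range p, (k.centralBinom : ZMod p) * x ^ k = (1 - 4 * x) ^ (p / 2) := by
  rw [sub_eq_add_neg,
    ← sum_range_choose_mul_pow_of_lt (Nat.div_lt_self (Fact.out : p.Prime).pos one_lt_two)]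
  refine sum_congr rfl fun k hk => ?_
  rw [centralBinom_eq_neg_four_pow_mul_choose hp (mem_range.1 hk)]
  ring

lemma pow_div_two_mul_sub_four (hp : Odd p) {a : ZMod p} (ha : a ≠ 0) :
    (a * (a - 4)) ^ (p / 2) = (1 - 4 * a⁻¹) ^ (p / 2) := by
  have hsq : a * (a - 4) = a ^ 2 * (1 - 4 * a⁻¹) := by field_simp
  have hp1 : 2 * (p / 2) = p - 1 := by have := Nat.two_mul_div_two_add_one_of_odd hp; omega
  rw [hsq, mul_pow, ← pow_mul, hp1, pow_card_sub_one_eq_one ha, one_mul]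

end ZMod

open ZMod in
theorem sun_2_1 (p : ℕ) [Fact p.Prime] (hp : Odd p) (m : ℤ) (hm : ¬ (p : ℤ) ∣ m) :
    ∑ k ∈ Finset.Icc 1 (p - 1), (catalan k : ZMod p) * ((m : ZMod p) ^ k)⁻¹ =
      ((m - 4 : ℤ) : ZMod p) * (2 : ZMod p)⁻¹ *
        (1 - (legendreSym p (m * (m - 4)) : ZMod p)) := by
  have hm0 : (m : ZMod p) ≠ 0 := by rwa [Ne, intCast_zmod_eq_zero_iff_dvd]
  have h2 : (2 : ZMod p) ≠ 0 := by
    exact_mod_cast natCast_ne_zero_of_pos_of_lt two_pos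
      ((Fact.out : p.Prime).two_le.lt_of_ne' (by rintro rfl; norm_num at hp))
  simp_rw [← inv_pow]
  set x := (m : ZMod p)⁻¹
  have hcat := two_mul_sum_catalan_mul_pow p x
  rw [sum_range_centralBinom_mul_pow hp] at hcat
  have hshift := mul_sum_centralBinom_succ_mul_pow p x
  rw [sum_range_succ, sum_range_centralBinom_mul_pow hp, centralBinom_self, pow_card] at hshift
  rw [sum_Icc_one_sub_one (Fact.out : p.Prime).pos, legendreSym.eq_pow]
  push_cast [catalan_zero]
  rw [pow_div_two_mul_sub_four hp hm0, mul_right_comm, eq_mul_inv_iff_mul_eq₀ h2]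
  set U := ∑ k ∈ range p, ((k + 1).centralBinom : ZMod p) * x ^ k
  linear_combination hcat - m * hshift + (U - 2) * mul_inv_cancel₀ hm0
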